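/- The subgroup of SL(2,ℝ) generated by the two matrices T = (1, √3; 0, 1) and V = (2, −√3; √3, −1) equals G, the group of all matrices of the form (a, b√3; c√3, d) with a, b, c, d ∈ ℤ and ad − 3bc = 1. (In particular, an element of PSL(2,ℝ) belongs to the group G₃ generated by the Möbius transformations induced by T and V precisely when it is represented by a matrix of this form.) -/

import Mathlib

/-!
Matrices `(a, b√3; c√3, d)` are closed under products and adjugates, so they form a subgroup
containing `T` and `V`. Conversely, descend on `|c|`: left multiplication by `T ^ n` replaces `a`
by `a + 3nc`, after which `V` or `V ^ 2` moves `a + 3nc - c`, resp. `a + 3nc - 2c`, into the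
lower-left corner. As `ad - 3bc = 1` forces `3 ∤ a`, reducing `a` modulo `3|c|` makes one of
these smaller than `|c|`. When `c = 0`, the matrix is `T ^ b` or `-T ^ (-b)`, and `V ^ 3 = -1`.
-/

open Matrix

noncomputable def sqrtMat (m : ℕ) (a b c d : ℤ) : Matrix (Fin 2) (Fin 2) ℝ :=
  !![(a : ℝ), b * √(m : ℝ); c * √(m : ℝ), d]

section SqrtMat

variable (m : ℕ)

theorem sqrtMat_mul (a b c d a' b' c' d' : ℤ) :
    sqrtMat m a b c d * sqrtMat m a' b' c' d' =
      sqrtMat m (a * a' + m * b * c') (a * b' + b * d') (c * a' + d * c')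
        (m * c * b' + d * d') := by
  have hm : √(m : ℝ) * √(m : ℝ) = m := Real.mul_self_sqrt m.cast_nonneg
  ext i j
  fin_cases i <;> fin_cases j <;> simp [sqrtMat, Matrix.mul_apply]
  · linear_combination (b * c' : ℝ) * hm
  · ring
  · ring
  · linear_combination (c * b' : ℝ) * hm

theorem det_sqrtMat (a b c d : ℤ) :
    (sqrtMat m a b c d).det = ((a * d - m * b * c : ℤ) : ℝ) := by
  have hm : √(m : ℝ) * √(m : ℝ) = m := Real.mul_self_sqrt m.cast_nonneg
  simp only [sqrtMat, det_fin_two_of]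
  push_cast
  linear_combination (-(b * c) : ℝ) * hm

theorem adjugate_sqrtMat (a b c d : ℤ) :
    adjugate (sqrtMat m a b c d) = sqrtMat m d (-b) (-c) a := by
  simp only [sqrtMat, adjugate_fin_two_of]
  push_cast
  ring_nf

theorem one_eq_sqrtMat : (1 : Matrix (Fin 2) (Fin 2) ℝ) = sqrtMat m 1 0 0 1 := by
  simp [sqrtMat, one_fin_two]

end SqrtMat

open scoped MatrixGroups

theorem det_eq_one_of_coe_eq_sqrtMat {m : ℕ} {A : SL(2, ℝ)} {a b c d : ℤ}
    (hA : (A : Matrix (Fin 2) (Fin 2) ℝ) = sqrtMat m a b c d) : a * d - m * b * c = 1 := by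
  have h := A.2
  rw [hA, det_sqrtMat] at h
  exact_mod_cast h

noncomputable def sqrtSubgroup (m : ℕ) : Subgroup SL(2, ℝ) where
  carrier := {A | ∃ a b c d : ℤ, (A : Matrix (Fin 2) (Fin 2) ℝ) = sqrtMat m a b c d}
  mul_mem' := by
    rintro A B ⟨a, b, c, d, hA⟩ ⟨a', b', c', d', hB⟩
    exact ⟨_, _, _, _, by rw [Matrix.SpecialLinearGroup.coe_mul, hA, hB, sqrtMat_mul]⟩
  one_mem' := ⟨1, 0, 0, 1, one_eq_sqrtMat m⟩
  inv_mem' := by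
    rintro A ⟨a, b, c, d, hA⟩
    exact ⟨d, -b, -c, a, by rw [Matrix.SpecialLinearGroup.coe_inv, hA, adjugate_sqrtMat]⟩

theorem mem_sqrtSubgroup_iff {m : ℕ} {A : SL(2, ℝ)} :
    A ∈ sqrtSubgroup m ↔ ∃ a b c d : ℤ,
      (A : Matrix (Fin 2) (Fin 2) ℝ) = sqrtMat m a b c d ∧ a * d - m * b * c = 1 :=
  ⟨fun ⟨a, b, c, d, hA⟩ => ⟨a, b, c, d, hA, det_eq_one_of_coe_eq_sqrtMat hA⟩,
    fun ⟨a, b, c, d, hA, _⟩ => ⟨a, b, c, d, hA⟩⟩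

theorem coe_zpow_of_coe_eq_sqrtMat {m : ℕ} {T : SL(2, ℝ)}
    (hT : (T : Matrix (Fin 2) (Fin 2) ℝ) = sqrtMat m 1 1 0 1) (n : ℤ) :
    ((T ^ n : SL(2, ℝ)) : Matrix (Fin 2) (Fin 2) ℝ) = sqrtMat m 1 n 0 1 := by
  induction n using Int.induction_on with
  | zero => simp [← one_eq_sqrtMat]
  | succ n ih =>
    rw [_root_.zpow_add_one, Matrix.SpecialLinearGroup.coe_mul, ih, hT, sqrtMat_mul]
    congr 1
    ring
  | pred n ih =>
    rw [_root_.zpow_sub_one, Matrix.SpecialLinearGroup.coe_mul, ih,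
      Matrix.SpecialLinearGroup.coe_inv, hT, adjugate_sqrtMat, sqrtMat_mul]
    congr 1 <;> ring

theorem Int.exists_natAbs_add_three_mul_sub_lt_of_pos {a c : ℤ} (hc : 0 < c) (ha : ¬ 3 ∣ a) :
    ∃ n : ℤ, (a + 3 * n * c - c).natAbs < c.natAbs ∨
      (a + 3 * n * c - 2 * c).natAbs < c.natAbs := by
  -- `r = a % 3c` lies in `(0, 3c)`, so `r - c` or `r - 2c` lies in `(-c, c)`.
  have hr : a + 3 * -(a / (3 * c)) * c = a % (3 * c) := by rw [Int.emod_def]; ring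
  have hr_pos : 0 < a % (3 * c) := by
    refine (Int.emod_nonneg a (by omega)).lt_of_ne' fun h => ha ?_
    exact (Dvd.intro c rfl).trans (Int.dvd_of_emod_eq_zero h)
  have hr_lt := Int.emod_lt_of_pos a (show 0 < 3 * c by omega)
  exact ⟨-(a / (3 * c)), by omega⟩

theorem Int.exists_natAbs_add_three_mul_sub_lt {a c : ℤ} (hc : c ≠ 0) (ha : ¬ 3 ∣ a) :
    ∃ n : ℤ, (a + 3 * n * c - c).natAbs < c.natAbs ∨
      (a + 3 * n * c - 2 * c).natAbs < c.natAbs := by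
  rcases hc.lt_or_gt with hc | hc
  · obtain ⟨n, hn⟩ := exists_natAbs_add_three_mul_sub_lt_of_pos (a := -a) (c := -c) (by omega)
      (by rwa [Int.dvd_neg])
    refine ⟨n, ?_⟩
    rw [← Int.natAbs_neg c, ← Int.natAbs_neg (a + _ - c), ← Int.natAbs_neg (a + _ - 2 * c)]
    convert hn using 3 <;> ring
  · exact exists_natAbs_add_three_mul_sub_lt_of_pos hc ha

section ThreeGenerators

variable {T V : SL(2, ℝ)}

theorem coe_pow_two_of_coe_eq_sqrtMat
    (hV : (V : Matrix (Fin 2) (Fin 2) ℝ) = sqrtMat 3 2 (-1) 1 (-1)) :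
    ((V ^ 2 : SL(2, ℝ)) : Matrix (Fin 2) (Fin 2) ℝ) = sqrtMat 3 1 (-1) 1 (-2) := by
  rw [Matrix.SpecialLinearGroup.coe_pow, sq, hV, sqrtMat_mul]
  norm_num

theorem coe_pow_three_of_coe_eq_sqrtMat
    (hV : (V : Matrix (Fin 2) (Fin 2) ℝ) = sqrtMat 3 2 (-1) 1 (-1)) :
    ((V ^ 3 : SL(2, ℝ)) : Matrix (Fin 2) (Fin 2) ℝ) = sqrtMat 3 (-1) 0 0 (-1) := by
  rw [pow_succ, Matrix.SpecialLinearGroup.coe_mul, coe_pow_two_of_coe_eq_sqrtMat hV, hV,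
    sqrtMat_mul]
  norm_num

theorem mem_closure_of_coe_eq_sqrtMat_of_lowerLeft_eq_zero
    (hT : (T : Matrix (Fin 2) (Fin 2) ℝ) = sqrtMat 3 1 1 0 1)
    (hV : (V : Matrix (Fin 2) (Fin 2) ℝ) = sqrtMat 3 2 (-1) 1 (-1))
    {A : SL(2, ℝ)} {a b d : ℤ} (hA : (A : Matrix (Fin 2) (Fin 2) ℝ) = sqrtMat 3 a b 0 d) :
    A ∈ Subgroup.closure {T, V} := by
  have hTmem : T ∈ Subgroup.closure {T, V} := Subgroup.subset_closure (by simp)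
  have hVmem : V ∈ Subgroup.closure {T, V} := Subgroup.subset_closure (by simp)
  have had : a * d = 1 := by simpa using det_eq_one_of_coe_eq_sqrtMat hA
  rcases Int.mul_eq_one_iff_eq_one_or_neg_one.mp had with ⟨rfl, rfl⟩ | ⟨rfl, rfl⟩
  · have : A = T ^ b := Subtype.ext (by rw [hA, coe_zpow_of_coe_eq_sqrtMat hT])
    exact this ▸ zpow_mem hTmem b
  · -- `V ^ 3 = -1`
    have : V ^ 3 * A = T ^ (-b) := Subtype.ext <| by
      rw [Matrix.SpecialLinearGroup.coe_mul, coe_pow_three_of_coe_eq_sqrtMat hV, hA, sqrtMat_mul,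
        coe_zpow_of_coe_eq_sqrtMat hT]
      congr 1 <;> ring
    exact (Subgroup.mul_mem_cancel_left _ (pow_mem hVmem 3)).1 (this ▸ zpow_mem hTmem (-b))

theorem exists_mem_closure_mul_natAbs_lowerLeft_lt
    (hT : (T : Matrix (Fin 2) (Fin 2) ℝ) = sqrtMat 3 1 1 0 1)
    (hV : (V : Matrix (Fin 2) (Fin 2) ℝ) = sqrtMat 3 2 (-1) 1 (-1))
    {A : SL(2, ℝ)} {a b c d : ℤ} (hA : (A : Matrix (Fin 2) (Fin 2) ℝ) = sqrtMat 3 a b c d)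
    (hc : c ≠ 0) :
    ∃ g ∈ Subgroup.closure {T, V}, ∃ a' b' c' d' : ℤ,
      ((g * A : SL(2, ℝ)) : Matrix (Fin 2) (Fin 2) ℝ) = sqrtMat 3 a' b' c' d' ∧
        c'.natAbs < c.natAbs := by
  have hTmem : T ∈ Subgroup.closure {T, V} := Subgroup.subset_closure (by simp)
  have hVmem : V ∈ Subgroup.closure {T, V} := Subgroup.subset_closure (by simp)
  have ha : ¬ 3 ∣ a := by
    rintro ⟨t, rfl⟩
    have hdet := det_eq_one_of_coe_eq_sqrtMat hA
    have : (3 : ℤ) ∣ 1 := ⟨t * d - b * c, by rw [← hdet]; push_cast; ring⟩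
    norm_num at this
  obtain ⟨n, hlt | hlt⟩ := Int.exists_natAbs_add_three_mul_sub_lt hc ha
  · refine ⟨V * T ^ n, mul_mem hVmem (zpow_mem hTmem n), _, _, _, _, by
      rw [Matrix.SpecialLinearGroup.coe_mul, Matrix.SpecialLinearGroup.coe_mul, hV,
        coe_zpow_of_coe_eq_sqrtMat hT, hA, sqrtMat_mul, sqrtMat_mul], ?_⟩
    convert hlt using 2
    push_cast
    ring
  · refine ⟨V ^ 2 * T ^ n, mul_mem (pow_mem hVmem 2) (zpow_mem hTmem n), _, _, _, _, by
      rw [Matrix.SpecialLinearGroup.coe_mul, Matrix.SpecialLinearGroup.coe_mul,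
        coe_pow_two_of_coe_eq_sqrtMat hV, coe_zpow_of_coe_eq_sqrtMat hT, hA, sqrtMat_mul,
        sqrtMat_mul], ?_⟩
    convert hlt using 2
    push_cast
    ring

theorem sqrtSubgroup_three_le_closure
    (hT : (T : Matrix (Fin 2) (Fin 2) ℝ) = sqrtMat 3 1 1 0 1)
    (hV : (V : Matrix (Fin 2) (Fin 2) ℝ) = sqrtMat 3 2 (-1) 1 (-1)) :
    sqrtSubgroup 3 ≤ Subgroup.closure {T, V} := by
  rintro A ⟨a, b, c, d, hA⟩
  induction h : c.natAbs using Nat.strong_induction_on generalizing A a b c d with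
  | _ k ih =>
  rcases eq_or_ne c 0 with rfl | hc
  · exact mem_closure_of_coe_eq_sqrtMat_of_lowerLeft_eq_zero hT hV hA
  · obtain ⟨g, hg, a', b', c', d', hgA, hlt⟩ :=
      exists_mem_closure_mul_natAbs_lowerLeft_lt hT hV hA hc
    exact (Subgroup.mul_mem_cancel_left _ hg).1 (ih _ (h ▸ hlt) _ _ _ _ hgA rfl)

theorem closure_eq_sqrtSubgroup_three
    (hT : (T : Matrix (Fin 2) (Fin 2) ℝ) = sqrtMat 3 1 1 0 1)
    (hV : (V : Matrix (Fin 2) (Fin 2) ℝ) = sqrtMat 3 2 (-1) 1 (-1)) :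
    Subgroup.closure {T, V} = sqrtSubgroup 3 := by
  refine le_antisymm ((Subgroup.closure_le _).2 ?_) (sqrtSubgroup_three_le_closure hT hV)
  rintro _ (rfl | rfl)
  exacts [⟨1, 1, 0, 1, hT⟩, ⟨2, -1, 1, -1, hV⟩]

end ThreeGenerators

theorem closure_T_V_eq_sqrt3_group
    (T V : Matrix.SpecialLinearGroup (Fin 2) ℝ)
    (hT : (T : Matrix (Fin 2) (Fin 2) ℝ) = !![1, Real.sqrt 3; 0, 1])
    (hV : (V : Matrix (Fin 2) (Fin 2) ℝ) = !![2, -Real.sqrt 3; Real.sqrt 3, -1]) :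
    (Subgroup.closure {T, V} : Set (Matrix.SpecialLinearGroup (Fin 2) ℝ)) =
      {A : Matrix.SpecialLinearGroup (Fin 2) ℝ | ∃ a b c d : ℤ,
        (A : Matrix (Fin 2) (Fin 2) ℝ) =
          !![(a:ℝ), (b:ℝ) * Real.sqrt 3; (c:ℝ) * Real.sqrt 3, (d:ℝ)] ∧
        a * d - 3 * b * c = 1} := by
  rw [closure_eq_sqrtSubgroup_three (by rw [hT]; simp [sqrtMat]) (by rw [hV]; simp [sqrtMat])]
  ext A
  simpa [sqrtMat] using mem_sqrtSubgroup_iff (m := 3) (A := A)
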